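/- arXiv:1909.12629 — 4 statements merged into one kernel-verified Lean document; each statement's English description precedes it below -/
import Mathlib

section
/- Let $A>0$, $\lambda\in\mathbb{R}$, let $d_0\geq 1$ be an integer, set $n=1+d_0$, let $k\in\mathbb{N}$ and let $\alpha\in\mathbb{R}$ with $\alpha>nA$. Define $F(u)=-\tfrac{1}{A}\log(1-u)$ for $u\in(0,1)$ and $H(u)=e^{-\alpha F(u)}\,F'(u)^{d_0-1}\,(F'(u)+u F''(u))\,(1+\lambda u F'(u))$. Then $\frac{\Gamma(k+1)}{\Gamma(k+d_0)}\int_0^1 u^{k+d_0-1}H(u)\,du=\frac{\Gamma(k+1)\,\Gamma(\alpha/A-n)\,(\alpha+\lambda k+d_0\lambda-nA)}{A^{n}\,\Gamma(\alpha/A+k)}$. -/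
/-!
With `F u = -(1/A) log (1 - u)` one has `F' = 1 / (A (1 - u))`, `F' + u F'' = 1 / (A (1 - u)²)`
and `e^{-αF} = (1 - u)^{α/A}`, so the density collapses to
`H u = A^{-n} (A + (λ - A) u) (1 - u)^{α/A - n - 1}`. The weight is therefore a combination of
two Euler beta integrals `B(k + d₀, s)` and `B(k + d₀ + 1, s)` with `s = α/A - n > 0`, and the
recurrence `B(p + 1, s) = p / (p + s) · B(p, s)` merges them into the stated Gamma quotient.
-/

open Real MeasureTheory Set

lemma ofReal_rpow_mul_one_sub_rpow {a b u : ℝ} (hu0 : 0 ≤ u) (hu1 : u ≤ 1) :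
    (u : ℂ) ^ ((a : ℂ) - 1) * (1 - (u : ℂ)) ^ ((b : ℂ) - 1) =
      ((u ^ (a - 1) * (1 - u) ^ (b - 1) : ℝ) : ℂ) := by
  push_cast
  rw [Complex.ofReal_cpow hu0, Complex.ofReal_cpow (sub_nonneg.2 hu1)]
  push_cast; rfl

lemma integrableOn_rpow_mul_one_sub_rpow {a b : ℝ} (ha : 0 < a) (hb : 0 < b) :
    IntegrableOn (fun u : ℝ => u ^ (a - 1) * (1 - u) ^ (b - 1)) (Ioo 0 1) := by
  have hC := (intervalIntegrable_iff_integrableOn_Ioc_of_le zero_le_one).mp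
    (Complex.betaIntegral_convergent (u := a) (v := b) (by simpa) (by simpa))
  refine IntegrableOn.mono_set (hC.re.congr ((ae_restrict_iff' measurableSet_Ioc).mpr
    (ae_of_all _ fun u hu => ?_))) Ioo_subset_Ioc_self
  simp only [ofReal_rpow_mul_one_sub_rpow hu.1.le hu.2]
  exact Complex.ofReal_re _

lemma integral_rpow_mul_one_sub_rpow {a b : ℝ} (ha : 0 < a) (hb : 0 < b) :
    ∫ u in Ioo (0 : ℝ) 1, u ^ (a - 1) * (1 - u) ^ (b - 1) =
      Gamma a * Gamma b / Gamma (a + b) := by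
  have h := Complex.betaIntegral_eq_Gamma_mul_div a b (by simpa) (by simpa)
  rw [Complex.betaIntegral, intervalIntegral.integral_of_le zero_le_one,
    setIntegral_congr_fun measurableSet_Ioc fun u hu => ofReal_rpow_mul_one_sub_rpow hu.1.le hu.2,
    integral_complex_ofReal, integral_Ioc_eq_integral_Ioo, ← Complex.ofReal_add,
    Complex.Gamma_ofReal, Complex.Gamma_ofReal, Complex.Gamma_ofReal] at h
  exact_mod_cast h

lemma integral_affine_mul_rpow_mul_one_sub_rpow {p s : ℝ} (hp : 0 < p) (hs : 0 < s) (a c : ℝ) :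
    ∫ u in Ioo (0 : ℝ) 1, (a + c * u) * u ^ (p - 1) * (1 - u) ^ (s - 1) =
      Gamma p * Gamma s * (a * s + (a + c) * p) / Gamma (p + s + 1) := by
  have hp1 : 0 < p + 1 := by linarith
  have hshift : EqOn (fun u : ℝ => (a + c * u) * u ^ (p - 1) * (1 - u) ^ (s - 1))
      (fun u => a * (u ^ (p - 1) * (1 - u) ^ (s - 1)) + c * (u ^ (p + 1 - 1) * (1 - u) ^ (s - 1)))
      (Ioo 0 1) := fun u hu => by
    simp only [add_sub_cancel_right, rpow_sub_one hu.1.ne']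
    field_simp [hu.1.ne']
  rw [setIntegral_congr_fun measurableSet_Ioo hshift,
    integral_add ((integrableOn_rpow_mul_one_sub_rpow hp hs).const_mul a)
      ((integrableOn_rpow_mul_one_sub_rpow hp1 hs).const_mul c),
    integral_const_mul, integral_const_mul, integral_rpow_mul_one_sub_rpow hp hs,
    integral_rpow_mul_one_sub_rpow hp1 hs, add_right_comm, Gamma_add_one hp.ne',
    Gamma_add_one (by positivity)]
  have : Gamma (p + s) ≠ 0 := (Gamma_pos_of_pos (by positivity)).ne'
  field_simp
  ring

lemma deriv_eq_of_eqOn_neg_log_one_sub {A : ℝ} {F : ℝ → ℝ}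
    (hF : EqOn F (fun u => -(1 / A) * log (1 - u)) (Ioo 0 1)) {u : ℝ} (hu : u ∈ Ioo 0 1) :
    deriv F u = (A * (1 - u))⁻¹ := by
  have hu1 : 1 - u ≠ 0 := by linarith [hu.2]
  rw [(Filter.eventuallyEq_of_mem (isOpen_Ioo.mem_nhds hu) hF).deriv_eq]
  refine ((((hasDerivAt_id' u).const_sub 1).log hu1).const_mul (-(1 / A))).deriv.trans ?_
  field_simp

lemma deriv_deriv_eq_of_eqOn_neg_log_one_sub {A : ℝ} {F : ℝ → ℝ}
    (hF : EqOn F (fun u => -(1 / A) * log (1 - u)) (Ioo 0 1)) {u : ℝ} (hu : u ∈ Ioo 0 1) :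
    deriv (deriv F) u = (A * (1 - u) ^ 2)⁻¹ := by
  have hu1 : 1 - u ≠ 0 := by linarith [hu.2]
  have hF' : deriv F =ᶠ[nhds u] fun v => A⁻¹ * (1 - v)⁻¹ := by
    filter_upwards [isOpen_Ioo.mem_nhds hu] with v hv
    rw [deriv_eq_of_eqOn_neg_log_one_sub hF hv, mul_inv]
  rw [hF'.deriv_eq]
  refine ((((hasDerivAt_id' u).const_sub 1).inv hu1).const_mul A⁻¹).deriv.trans ?_
  field_simp

lemma fibreDensity_eq_of_eqOn_neg_log_one_sub {A : ℝ} (hA : A ≠ 0) (lam α : ℝ) {d0 : ℕ}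
    (hd0 : 1 ≤ d0) {F : ℝ → ℝ} (hF : EqOn F (fun u => -(1 / A) * log (1 - u)) (Ioo 0 1))
    {u : ℝ} (hu : u ∈ Ioo (0 : ℝ) 1) :
    exp (-(α * F u)) * deriv F u ^ (d0 - 1) * (deriv F u + u * deriv (deriv F) u) *
        (1 + lam * u * deriv F u) =
      (A ^ (d0 + 1))⁻¹ * (A + (lam - A) * u) * (1 - u) ^ (α / A - (d0 + 1) - 1) := by
  have hu1 : 0 < 1 - u := by linarith [hu.2]
  have hexp : exp (-(α * F u)) = (1 - u) ^ (α / A) := by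
    rw [hF hu, rpow_def_of_pos hu1]
    congr 1
    field_simp
  have hsplit : (1 - u) ^ (α / A - (d0 + 1) - 1) = (1 - u) ^ (α / A) / (1 - u) ^ (d0 + 2) := by
    rw [← rpow_natCast, ← rpow_sub hu1]
    congr 1
    push_cast
    ring
  obtain ⟨m, rfl⟩ := Nat.exists_eq_add_of_le' hd0
  rw [hexp, hsplit, deriv_eq_of_eqOn_neg_log_one_sub hF hu,
    deriv_deriv_eq_of_eqOn_neg_log_one_sub hF hu, Nat.add_sub_cancel]
  simp only [mul_inv, mul_pow, inv_pow]
  field_simp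
  ring

/-- the fibre weight `ψ(α,k)` for the ball subbundle case with base
dimension `d = 1`, `F(u) = -(1/A) log(1-u)`. -/
theorem stmt_0 (A : ℝ) (hA : 0 < A) (lam : ℝ) (d0 : ℕ) (hd0 : 1 ≤ d0)
    (n : ℕ) (hn : n = 1 + d0) (k : ℕ) (α : ℝ) (hα : (n : ℝ) * A < α)
    (F : ℝ → ℝ) (hF : ∀ u ∈ Ioo (0 : ℝ) 1, F u = -(1 / A) * Real.log (1 - u))
    (H : ℝ → ℝ)
    (hH : ∀ u ∈ Ioo (0 : ℝ) 1,
      H u = Real.exp (-(α * F u)) * (deriv F u) ^ (d0 - 1) *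
        (deriv F u + u * deriv (deriv F) u) * (1 + lam * u * deriv F u)) :
    Real.Gamma (k + 1) / Real.Gamma (k + d0) *
        ∫ u in Ioo (0 : ℝ) 1, u ^ (k + d0 - 1) * H u =
      Real.Gamma (k + 1) * Real.Gamma (α / A - n) *
          (α + lam * k + d0 * lam - n * A) /
        (A ^ n * Real.Gamma (α / A + k)) := by
  subst hn
  have hp : (0 : ℝ) < k + d0 := by positivity
  have hs : 0 < α / A - (d0 + 1) := by
    rw [sub_pos, lt_div_iff₀ hA]
    push_cast at hα
    linarith
  have hintegrand : EqOn (fun u : ℝ => u ^ (k + d0 - 1) * H u)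
      (fun u => (A ^ (d0 + 1))⁻¹ *
        ((A + (lam - A) * u) * u ^ ((k + d0 : ℝ) - 1) * (1 - u) ^ (α / A - (d0 + 1) - 1)))
      (Ioo 0 1) := fun u hu => by
    dsimp only
    rw [hH u hu, fibreDensity_eq_of_eqOn_neg_log_one_sub hA.ne' lam α hd0 hF hu, ← rpow_natCast,
      Nat.cast_sub (by omega)]
    push_cast
    ring
  rw [setIntegral_congr_fun measurableSet_Ioo hintegrand, integral_const_mul,
    integral_affine_mul_rpow_mul_one_sub_rpow hp hs]
  have hGamma : Gamma (k + d0) ≠ 0 := (Gamma_pos_of_pos hp).ne'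
  rw [show (k + d0 : ℝ) + (α / A - (d0 + 1)) + 1 = α / A + k by ring,
    show ((1 + d0 : ℕ) : ℝ) = d0 + 1 by push_cast; ring]
  generalize Gamma (α / A - (d0 + 1)) = Gs
  field_simp
  ring
end

section
/- Let $\lambda>0$, let $d\geq 1$ and $d_0\geq 1$ be integers, set $n=d+d_0$, let $k\in\mathbb{N}$ and let $\alpha\in\mathbb{R}$ with $\alpha>n\lambda$. Define $F(u)=-\tfrac{1}{\lambda}\log(1-u)$ for $u\in(0,1)$ and $H(u)=e^{-\alpha F(u)}\,F'(u)^{d_0-1}\,(F'(u)+u F''(u))\,(1+\lambda u F'(u))^{d}$. Then $\frac{\Gamma(k+1)}{\Gamma(k+d_0)}\int_0^1 u^{k+d_0-1}H(u)\,du=\frac{\Gamma(k+1)\,\Gamma(\alpha/\lambda-n)}{\lambda^{d_0}\,\Gamma(\alpha/\lambda+k-d)}$. -/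
open Real MeasureTheory Set

/-!
With `F u = -(1/λ) log (1 - u)` one has `e^{-αF} = (1 - u)^{α/λ}`, `F' = 1/(λ(1 - u))`,
`F' + u F'' = 1/(λ(1 - u)²)` and `1 + λ u F' = 1/(1 - u)`, so `u^{k+d₀-1} H(u)` collapses to
`λ^{-d₀} u^{k+d₀-1} (1 - u)^{α/λ-n-1}`. The integral is then the Beta integral
`B(k + d₀, α/λ - n) = Γ(k + d₀) Γ(α/λ - n) / Γ(α/λ + k - d)`, and `Γ(k + d₀)` cancels.
-/

theorem integral_Ioo_rpow_mul_one_sub_rpow {a b : ℝ} (ha : 0 < a) (hb : 0 < b) :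
    ∫ x in Ioo (0 : ℝ) 1, x ^ (a - 1) * (1 - x) ^ (b - 1) =
      Gamma a * Gamma b / Gamma (a + b) := by
  have h_beta : Complex.betaIntegral a b =
      ((∫ x in Ioo (0 : ℝ) 1, x ^ (a - 1) * (1 - x) ^ (b - 1) : ℝ) : ℂ) := by
    rw [Complex.betaIntegral, ← integral_Ioc_eq_integral_Ioo,
      ← intervalIntegral.integral_of_le zero_le_one, ← intervalIntegral.integral_ofReal]
    refine intervalIntegral.integral_congr fun x hx => ?_
    rw [uIcc_of_le zero_le_one] at hx
    push_cast [Complex.ofReal_cpow hx.1, Complex.ofReal_cpow (sub_nonneg.2 hx.2)]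
    rfl
  have h := Complex.Gamma_mul_Gamma_eq_betaIntegral (s := a) (t := b) (by simpa) (by simpa)
  rw [h_beta, ← Complex.ofReal_add, Complex.Gamma_ofReal, Complex.Gamma_ofReal,
    Complex.Gamma_ofReal] at h
  rw [eq_div_iff (Gamma_pos_of_pos (add_pos ha hb)).ne', mul_comm]
  exact_mod_cast h.symm

theorem hasDerivAt_neg_log_one_sub_div (lam : ℝ) {u : ℝ} (hu : u ≠ 1) :
    HasDerivAt (fun v => -(1 / lam) * log (1 - v)) (lam * (1 - u))⁻¹ u := by
  refine ((((hasDerivAt_id' u).const_sub 1).log (sub_ne_zero.2 hu.symm)).const_mul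
    (-(1 / lam))).congr_deriv ?_
  rw [mul_inv]
  ring

theorem hasDerivAt_inv_mul_one_sub {lam u : ℝ} (hlam : lam ≠ 0) (hu : u ≠ 1) :
    HasDerivAt (fun v => (lam * (1 - v))⁻¹) (lam * (1 - u) ^ 2)⁻¹ u := by
  have h1u : 1 - u ≠ 0 := sub_ne_zero.2 hu.symm
  refine ((((hasDerivAt_id' u).const_sub 1).const_mul lam).inv
    (mul_ne_zero hlam h1u)).congr_deriv ?_
  field_simp

section LogPotential

variable {lam : ℝ} {F : ℝ → ℝ} {s : Set ℝ}

theorem deriv_eqOn_of_eqOn_neg_log_one_sub (hs : IsOpen s) (h1 : (1 : ℝ) ∉ s)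
    (hF : EqOn F (fun u => -(1 / lam) * log (1 - u)) s) :
    EqOn (deriv F) (fun u => (lam * (1 - u))⁻¹) s := fun u hu => by
  rw [hF.deriv hs hu, (hasDerivAt_neg_log_one_sub_div lam (ne_of_mem_of_not_mem hu h1)).deriv]

theorem deriv_deriv_eqOn_of_eqOn_neg_log_one_sub (hlam : lam ≠ 0) (hs : IsOpen s)
    (h1 : (1 : ℝ) ∉ s) (hF : EqOn F (fun u => -(1 / lam) * log (1 - u)) s) :
    EqOn (deriv (deriv F)) (fun u => (lam * (1 - u) ^ 2)⁻¹) s := fun u hu => by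
  rw [(deriv_eqOn_of_eqOn_neg_log_one_sub hs h1 hF).deriv hs hu,
    (hasDerivAt_inv_mul_one_sub hlam (ne_of_mem_of_not_mem hu h1)).deriv]

end LogPotential

theorem pow_mul_fibreIntegrand_eq {lam α u : ℝ} (hlam : lam ≠ 0) (hu : u < 1)
    {d0 : ℕ} (hd0 : 1 ≤ d0) (k d : ℕ) :
    u ^ (k + d0 - 1) * (exp (-(α * (-(1 / lam) * log (1 - u)))) *
      (lam * (1 - u))⁻¹ ^ (d0 - 1) * ((lam * (1 - u))⁻¹ + u * (lam * (1 - u) ^ 2)⁻¹) *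
      (1 + lam * u * (lam * (1 - u))⁻¹) ^ d) =
      (lam ^ d0)⁻¹ * (u ^ ((k : ℝ) + d0 - 1) * (1 - u) ^ (α / lam - (d + d0 : ℕ) - 1)) := by
  have hx : 0 < 1 - u := sub_pos.2 hu
  have h_exp : exp (-(α * (-(1 / lam) * log (1 - u)))) = (1 - u) ^ (α / lam) := by
    rw [rpow_def_of_pos hx]
    ring_nf
  have h_mid : (lam * (1 - u))⁻¹ + u * (lam * (1 - u) ^ 2)⁻¹ = (lam * (1 - u) ^ 2)⁻¹ := by
    field_simp
    ring
  have h_last : 1 + lam * u * (lam * (1 - u))⁻¹ = (1 - u)⁻¹ := by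
    field_simp
    ring
  have h_left : u ^ ((k : ℝ) + d0 - 1) = u ^ (k + d0 - 1) := by
    rw [← rpow_natCast]
    push_cast [hd0, Nat.le_add_left_of_le hd0]
    ring_nf
  have h_right : (1 - u) ^ (α / lam - (d + d0 : ℕ) - 1) =
      (1 - u) ^ (α / lam) / (1 - u) ^ (d + d0 + 1) := by
    rw [sub_sub, rpow_sub hx, ← Nat.cast_add_one, rpow_natCast]
  obtain ⟨m, rfl⟩ : ∃ m, d0 = m + 1 := ⟨d0 - 1, by omega⟩
  rw [h_exp, h_mid, h_last, h_left, h_right, Nat.add_sub_cancel,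
    show k + (m + 1) - 1 = k + m by omega]
  simp only [mul_inv, mul_pow, inv_pow]
  field_simp
  ring

theorem stmt_1_general (lam : ℝ) (hlam : 0 < lam) (d d0 : ℕ) (hd0 : 1 ≤ d0)
    (n : ℕ) (hn : n = d + d0) (k : ℕ) (α : ℝ) (hα : (n : ℝ) * lam < α)
    (F : ℝ → ℝ) (hF : ∀ u ∈ Ioo (0 : ℝ) 1, F u = -(1 / lam) * Real.log (1 - u))
    (H : ℝ → ℝ)
    (hH : ∀ u ∈ Ioo (0 : ℝ) 1,
      H u = Real.exp (-(α * F u)) * (deriv F u) ^ (d0 - 1) *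
        (deriv F u + u * deriv (deriv F) u) * (1 + lam * u * deriv F u) ^ d) :
    Real.Gamma (k + 1) / Real.Gamma (k + d0) *
        ∫ u in Ioo (0 : ℝ) 1, u ^ (k + d0 - 1) * H u =
      Real.Gamma (k + 1) * Real.Gamma (α / lam - n) /
        (lam ^ d0 * Real.Gamma (α / lam + k - d)) := by
  subst hn
  have h1 : (1 : ℝ) ∉ Ioo 0 1 := fun h => h.2.false
  have hF' := deriv_eqOn_of_eqOn_neg_log_one_sub isOpen_Ioo h1 hF
  have hF'' := deriv_deriv_eqOn_of_eqOn_neg_log_one_sub hlam.ne' isOpen_Ioo h1 hF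
  have h_integrand : EqOn (fun u => u ^ (k + d0 - 1) * H u) (fun u => (lam ^ d0)⁻¹ *
      (u ^ ((k : ℝ) + d0 - 1) * (1 - u) ^ (α / lam - (d + d0 : ℕ) - 1))) (Ioo 0 1) :=
    fun u hu => by
      dsimp only
      rw [hH u hu, hF' hu, hF'' hu, hF u hu]
      exact pow_mul_fibreIntegrand_eq hlam.ne' hu.2 hd0 k d
  have ha : 0 < (k : ℝ) + d0 := by positivity
  have hb : 0 < α / lam - (d + d0 : ℕ) := by rwa [sub_pos, lt_div_iff₀ hlam]
  have h_sum : (k : ℝ) + d0 + (α / lam - (d + d0 : ℕ)) = α / lam + k - d := by push_cast; ring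
  rw [setIntegral_congr_fun measurableSet_Ioo h_integrand, integral_const_mul,
    integral_Ioo_rpow_mul_one_sub_rpow ha hb, h_sum]
  have hΓ : Gamma ((k : ℝ) + d0) ≠ 0 := (Gamma_pos_of_pos ha).ne'
  field_simp

/-- the fibre weight `ψ(α,k)` for the ball subbundle case, base
dimension `d > 0`, `F(u) = -(1/λ) log(1-u)`. -/
theorem stmt_1 (lam : ℝ) (hlam : 0 < lam) (d d0 : ℕ) (hd : 1 ≤ d) (hd0 : 1 ≤ d0)
    (n : ℕ) (hn : n = d + d0) (k : ℕ) (α : ℝ) (hα : (n : ℝ) * lam < α)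
    (F : ℝ → ℝ) (hF : ∀ u ∈ Ioo (0 : ℝ) 1, F u = -(1 / lam) * Real.log (1 - u))
    (H : ℝ → ℝ)
    (hH : ∀ u ∈ Ioo (0 : ℝ) 1,
      H u = Real.exp (-(α * F u)) * (deriv F u) ^ (d0 - 1) *
        (deriv F u + u * deriv (deriv F) u) * (1 + lam * u * deriv F u) ^ d) :
    Real.Gamma (k + 1) / Real.Gamma (k + d0) *
        ∫ u in Ioo (0 : ℝ) 1, u ^ (k + d0 - 1) * H u =
      Real.Gamma (k + 1) * Real.Gamma (α / lam - n) /
        (lam ^ d0 * Real.Gamma (α / lam + k - d)) :=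
  stmt_1_general lam hlam d d0 hd0 n hn k α hα F hF H hH
end

section
/- Let $A\in\mathbb{R}$, let $T\in\mathbb{R}\cup\{+\infty\}$, and let $F:(-\infty,T)\to\mathbb{R}$ be twice differentiable with $F''(t)=F'(t)+A\,F'(t)^2$ and $F'(t)>0$ for all $t<T$, and $\lim_{t\to-\infty}F(t)=0$. Then there exists $K>0$ such that: if $A=0$, then $F(t)=K e^{t}$ for all $t<T$; and if $A\neq 0$, then $1-AKe^{t}>0$ and $F(t)=-\tfrac{1}{A}\log(1-AKe^{t})$ for all $t<T$. -/
/-!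
By the ODE, the function `y = F' · exp (-A F)` satisfies `y' = y`, so
`y = K eᵗ` with `K > 0` because `F' > 0`. For `A = 0` this says `F' = K eᵗ`; for `A ≠ 0`,
`(exp (-A F))' = -A y = -A K eᵗ`. Integrating, with the constant fixed by `F → 0` at `-∞`,
gives `F = K eᵗ`, resp. `exp (-A F) = 1 - A K eᵗ`.
-/

open Real Filter Topology

section ODE

variable {S : Set ℝ} {f : ℝ → ℝ}

theorem IsOpen.exists_eqOn_const_of_hasDerivAt_zero (hS : IsOpen S) (hS' : IsPreconnected S)
    (hf : ∀ t ∈ S, HasDerivAt f 0 t) : ∃ a, ∀ t ∈ S, f t = a :=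
  hS.exists_is_const_of_deriv_eq_zero hS'
    (fun t ht => (hf t ht).differentiableAt.differentiableWithinAt)
    (fun t ht => (hf t ht).deriv)

theorem IsOpen.exists_eqOn_mul_exp_of_hasDerivAt_self (hS : IsOpen S) (hS' : IsPreconnected S)
    (hf : ∀ t ∈ S, HasDerivAt f (f t) t) : ∃ K, ∀ t ∈ S, f t = K * exp t := by
  have hzero : ∀ t ∈ S, HasDerivAt (fun s => f s * exp (-s)) 0 t := fun t ht =>
    ((hf t ht).mul (hasDerivAt_neg t).exp).congr_deriv (by ring)
  obtain ⟨K, hK⟩ := hS.exists_eqOn_const_of_hasDerivAt_zero hS' hzero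
  refine ⟨K, fun t ht => ?_⟩
  rw [← hK t ht, mul_assoc, ← exp_add, neg_add_cancel, exp_zero, mul_one]

theorem IsOpen.eqOn_add_mul_exp_of_tendsto_atBot (hS : IsOpen S) (hS' : IsPreconnected S)
    (hS_atBot : S ∈ atBot) {c L : ℝ} (hf : ∀ t ∈ S, HasDerivAt f (c * exp t) t)
    (hlim : Tendsto f atBot (𝓝 L)) : ∀ t ∈ S, f t = L + c * exp t := by
  have hzero : ∀ t ∈ S, HasDerivAt (fun s => f s - c * exp s) 0 t := fun t ht =>
    ((hf t ht).sub ((hasDerivAt_exp t).const_mul c)).congr_deriv (sub_self _)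
  obtain ⟨a, ha⟩ := hS.exists_eqOn_const_of_hasDerivAt_zero hS' hzero
  have hlim' : Tendsto (fun s => f s - c * exp s) atBot (𝓝 L) := by
    simpa using hlim.sub (tendsto_exp_atBot.const_mul c)
  have hev : (fun s => f s - c * exp s) =ᶠ[atBot] fun _ => a := eventually_of_mem hS_atBot ha
  have haL : a = L := tendsto_nhds_unique (tendsto_const_nhds.congr' hev.symm) hlim'
  intro t ht
  linarith [ha t ht]

end ODE

theorem hasDerivAt_mul_exp_neg_mul_of_ode {F x : ℝ → ℝ} {A t : ℝ} (hF : HasDerivAt F (x t) t)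
    (hx : HasDerivAt x (x t + A * x t ^ 2) t) :
    HasDerivAt (fun s => x s * exp (-(A * F s))) (x t * exp (-(A * F t))) t := by
  have hE : HasDerivAt (fun s => exp (-(A * F s))) (exp (-(A * F t)) * -(A * x t)) t :=
    (hF.const_mul A).neg.exp
  exact (hx.mul hE).congr_deriv (by ring)

theorem EReal.isOpen_setOf_coe_lt (T : EReal) : IsOpen {t : ℝ | (t : EReal) < T} :=
  isOpen_lt continuous_coe_real_ereal continuous_const

theorem EReal.isPreconnected_setOf_coe_lt (T : EReal) :
    IsPreconnected {t : ℝ | (t : EReal) < T} :=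
  isPreconnected_iff_ordConnected.2
    ⟨fun _ _ _ hb _ hx => (EReal.coe_le_coe_iff.2 hx.2).trans_lt hb⟩

theorem EReal.setOf_coe_lt_mem_atBot {T : EReal} (hT : T ≠ ⊥) :
    {t : ℝ | (t : EReal) < T} ∈ atBot := by
  obtain ⟨r, -, hr⟩ := EReal.lt_iff_exists_real_btwn.1 (bot_lt_iff_ne_bot.2 hT)
  exact mem_atBot_sets.2 ⟨r, fun t ht => (EReal.coe_le_coe_iff.2 ht).trans_lt hr⟩

/-- solving the ODE `F'' = F' + A (F')²` with `F' > 0` on `(-∞, T)`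
(where `T ∈ ℝ ∪ {+∞}` is encoded as an `EReal` different from `-∞`) and
`F(t) → 0` as `t → -∞`. -/
theorem stmt_7 (A : ℝ) (T : EReal) (hT : T ≠ ⊥) (F : ℝ → ℝ)
    (hF1 : ∀ t : ℝ, (t : EReal) < T → DifferentiableAt ℝ F t)
    (hF2 : ∀ t : ℝ, (t : EReal) < T → DifferentiableAt ℝ (deriv F) t)
    (hode : ∀ t : ℝ, (t : EReal) < T →
      deriv (deriv F) t = deriv F t + A * (deriv F t) ^ 2)
    (hpos : ∀ t : ℝ, (t : EReal) < T → 0 < deriv F t)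
    (hlim : Tendsto F atBot (nhds 0)) :
    ∃ K : ℝ, 0 < K ∧
      (A = 0 → ∀ t : ℝ, (t : EReal) < T → F t = K * Real.exp t) ∧
      (A ≠ 0 → ∀ t : ℝ, (t : EReal) < T →
        0 < 1 - A * K * Real.exp t ∧
        F t = -(1 / A) * Real.log (1 - A * K * Real.exp t)) := by
  set S : Set ℝ := {t : ℝ | (t : EReal) < T}
  have hS := EReal.isOpen_setOf_coe_lt T
  have hS' := EReal.isPreconnected_setOf_coe_lt T
  have hS_atBot := EReal.setOf_coe_lt_mem_atBot hT
  obtain ⟨t₀, ht₀⟩ := Filter.nonempty_of_mem hS_atBot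
  obtain ⟨K, hK⟩ := hS.exists_eqOn_mul_exp_of_hasDerivAt_self hS' fun t ht =>
    hasDerivAt_mul_exp_neg_mul_of_ode (hF1 t ht).hasDerivAt (hode t ht ▸ (hF2 t ht).hasDerivAt)
  have hK_pos : 0 < K := pos_of_mul_pos_left
    (hK t₀ ht₀ ▸ mul_pos (hpos t₀ ht₀) (exp_pos _)) (exp_pos t₀).le
  refine ⟨K, hK_pos, fun hA t ht => ?_, fun hA => ?_⟩
  · subst hA
    have hF' : ∀ s ∈ S, HasDerivAt F (K * exp s) s := fun s hs =>
      (hF1 s hs).hasDerivAt.congr_deriv (by simpa using hK s hs)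
    simpa using hS.eqOn_add_mul_exp_of_tendsto_atBot hS' hS_atBot hF' hlim t ht
  · have hexp : ∀ t ∈ S, exp (-(A * F t)) = 1 + -(A * K) * exp t := by
      refine hS.eqOn_add_mul_exp_of_tendsto_atBot hS' hS_atBot (fun t ht => ?_) ?_
      · refine ((hF1 t ht).hasDerivAt.const_mul A).neg.exp.congr_deriv ?_
        linear_combination -A * hK t ht
      · simpa [Function.comp_def] using (continuous_exp.tendsto _).comp (hlim.const_mul A).neg
    intro t ht
    have hpos' : 0 < 1 - A * K * exp t := by linarith [hexp t ht, exp_pos (-(A * F t))]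
    refine ⟨hpos', ?_⟩
    rw [show 1 - A * K * exp t = exp (-(A * F t)) by linarith [hexp t ht], log_exp]
    field_simp
end

section
/- Let $\lambda\neq 0$ be real, let $d\geq 1$ and $d_0\geq 1$ be integers, let $c_0,c_1,c_2\in\mathbb{R}$ with $c_1=0$ in case $d_0=1$, and let $I$ be a nonempty open interval contained in $\{x\in\mathbb{R}:x>0\text{ and }1+\lambda x>0\}$. Suppose $\varphi:I\to\mathbb{R}$ is smooth and the function $g(x)=(1+\lambda x)^{d}x^{d_0-1}\varphi(x)$ satisfies $g''(x)=(1+\lambda x)^{d}x^{d_0-1}\Big(c_0+\frac{c_1}{x}+\frac{c_2}{1+\lambda x}\Big)$ for all $x\in I$. Then there exist real constants $A_0,A_1,A_2$, $B_1,\dots,B_{d_0-1}$ and $C_1,\dots,C_d$ such that $\varphi(x)=A_0+A_1x+A_2x^{2}+\sum_{j=1}^{d_0-1}\frac{B_j}{x^{j}}+\sum_{j=1}^{d}\frac{C_j}{(1+\lambda x)^{j}}$ for all $x\in I$ (the sums being empty when the upper index is $0$). -/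
open Real Set Polynomial

/-- The space of partial-fraction-form functions. -/
def pfSpace (lam : ℝ) (d d0 : ℕ) (I : Set ℝ) : Submodule ℝ (ℝ → ℝ) where
  carrier := {f | ∃ A0 A1 A2 : ℝ, ∃ B C : ℕ → ℝ, ∀ x ∈ I,
    f x = A0 + A1 * x + A2 * x ^ 2 +
      (∑ j ∈ Finset.Icc 1 (d0 - 1), B j / x ^ j) +
      (∑ j ∈ Finset.Icc 1 d, C j / (1 + lam * x) ^ j)}
  zero_mem' := ⟨0, 0, 0, 0, 0, by intro x hx; simp⟩
  add_mem' := by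
    rintro f g ⟨A0, A1, A2, B, C, hf⟩ ⟨A0', A1', A2', B', C', hg⟩
    refine ⟨A0 + A0', A1 + A1', A2 + A2', B + B', C + C', fun x hx => ?_⟩
    have hB : ∀ j ∈ Finset.Icc 1 (d0-1), (B + B') j / x ^ j = B j / x ^ j + B' j / x ^ j :=
      fun j _ => by simp [add_div]
    have hC : ∀ j ∈ Finset.Icc 1 d, (C + C') j / (1 + lam*x) ^ j
        = C j / (1 + lam*x) ^ j + C' j / (1 + lam*x) ^ j := fun j _ => by simp [add_div]
    rw [Finset.sum_congr rfl hB, Finset.sum_congr rfl hC, Finset.sum_add_distrib,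
      Finset.sum_add_distrib]
    simp only [Pi.add_apply]
    rw [hf x hx, hg x hx]; ring
  smul_mem' := by
    rintro c f ⟨A0, A1, A2, B, C, hf⟩
    refine ⟨c * A0, c * A1, c * A2, c • B, c • C, fun x hx => ?_⟩
    have hB : ∀ j ∈ Finset.Icc 1 (d0-1), (c • B) j / x ^ j = c * (B j / x ^ j) :=
      fun j _ => by simp [mul_div_assoc]
    have hC : ∀ j ∈ Finset.Icc 1 d, (c • C) j / (1 + lam*x) ^ j
        = c * (C j / (1 + lam*x) ^ j) := fun j _ => by simp [mul_div_assoc]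
    rw [Finset.sum_congr rfl hB, Finset.sum_congr rfl hC, ← Finset.mul_sum, ← Finset.mul_sum]
    simp only [Pi.smul_apply, smul_eq_mul]
    rw [hf x hx]; ring

section pf
variable {lam : ℝ} {d d0 : ℕ} {I : Set ℝ}

lemma pf_congr {f g : ℝ → ℝ} (h : ∀ x ∈ I, f x = g x) (hg : g ∈ pfSpace lam d d0 I) :
    f ∈ pfSpace lam d d0 I := by
  obtain ⟨A0, A1, A2, B, C, hgf⟩ := hg
  exact ⟨A0, A1, A2, B, C, fun x hx => (h x hx).trans (hgf x hx)⟩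

lemma pf_pow {n : ℕ} (hn : n ≤ 2) : (fun x : ℝ => x ^ n) ∈ pfSpace lam d d0 I := by
  interval_cases n
  · exact ⟨1, 0, 0, 0, 0, by intro x hx; simp⟩
  · exact ⟨0, 1, 0, 0, 0, by intro x hx; simp⟩
  · exact ⟨0, 0, 1, 0, 0, by intro x hx; simp⟩

lemma pf_inv_x {j : ℕ} (hj : 1 ≤ j) (hj' : j ≤ d0 - 1) :
    (fun x : ℝ => 1 / x ^ j) ∈ pfSpace lam d d0 I := by
  refine ⟨0, 0, 0, fun k => if k = j then 1 else 0, 0, fun x hx => ?_⟩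
  rw [Finset.sum_eq_single j (fun k _ hk => by simp [hk])
    (fun h => absurd (Finset.mem_Icc.2 ⟨hj, hj'⟩) h)]
  simp

lemma pf_inv_u {j : ℕ} (hj : 1 ≤ j) (hj' : j ≤ d) :
    (fun x : ℝ => 1 / (1 + lam * x) ^ j) ∈ pfSpace lam d d0 I := by
  refine ⟨0, 0, 0, 0, fun k => if k = j then 1 else 0, fun x hx => ?_⟩
  rw [Finset.sum_eq_single j (fun k _ hk => by simp [hk])
    (fun h => absurd (Finset.mem_Icc.2 ⟨hj, hj'⟩) h)]
  simp

lemma pf_T (hlam : lam ≠ 0) (hpos : ∀ x ∈ I, 0 < x ∧ 0 < 1 + lam * x) :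
    ∀ m q : ℕ, m ≤ q + 2 → q ≤ d →
    (fun x : ℝ => x ^ m / (1 + lam * x) ^ q) ∈ pfSpace lam d d0 I := by
  intro m
  induction m with
  | zero =>
    intro q hm hq
    rcases Nat.eq_zero_or_pos q with h | h
    · subst h
      exact pf_congr (fun x hx => by simp) (pf_pow (n := 0) (by norm_num))
    · exact pf_congr (fun x hx => by simp) (pf_inv_u h hq)
  | succ m ih =>
    intro q hm hq
    match q with
    | 0 =>
      exact pf_congr (fun x hx => by simp) (pf_pow (n := m + 1) (by omega))
    | (q' + 1) =>
      have h1 := ih q' (by omega) (by omega)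
      have h2 := ih (q' + 1) (by omega) hq
      refine pf_congr (g := (1/lam) • ((fun x : ℝ => x ^ m / (1 + lam * x) ^ q')
          - fun x : ℝ => x ^ m / (1 + lam * x) ^ (q' + 1))) (fun x hx => ?_)
        (Submodule.smul_mem _ _ (Submodule.sub_mem _ h1 h2))
      obtain ⟨hx0, hu0⟩ := hpos x hx
      have hu : (1 + lam * x) ≠ 0 := ne_of_gt hu0
      simp only [Pi.smul_apply, Pi.sub_apply, smul_eq_mul]
      field_simp
      ring

lemma pf_R (hlam : lam ≠ 0) (hpos : ∀ x ∈ I, 0 < x ∧ 0 < 1 + lam * x) :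
    ∀ n p q : ℕ, p + q = n → p ≤ d0 - 1 → q ≤ d →
    (fun x : ℝ => 1 / (x ^ p * (1 + lam * x) ^ q)) ∈ pfSpace lam d d0 I := by
  intro n
  induction n with
  | zero =>
    intro p q hn hp hq
    obtain ⟨rfl, rfl⟩ : p = 0 ∧ q = 0 := by omega
    exact pf_congr (fun x hx => by simp) (pf_pow (n := 0) (by norm_num))
  | succ n ih =>
    intro p q hn hp hq
    match p, q with
    | 0, q =>
      rcases Nat.eq_zero_or_pos q with h | h
      · subst h; exact pf_congr (fun x hx => by simp) (pf_pow (n := 0) (by norm_num))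
      · exact pf_congr (fun x hx => by simp) (pf_inv_u h hq)
    | (p' + 1), 0 =>
      exact pf_congr (fun x hx => by simp) (pf_inv_x (by omega) hp)
    | (p' + 1), (q' + 1) =>
      have h1 := ih (p' + 1) q' (by omega) hp (by omega)
      have h2 := ih p' (q' + 1) (by omega) (by omega) hq
      refine pf_congr (g := (fun x : ℝ => 1 / (x ^ (p'+1) * (1 + lam * x) ^ q'))
          - lam • fun x : ℝ => 1 / (x ^ p' * (1 + lam * x) ^ (q'+1))) (fun x hx => ?_)
        (Submodule.sub_mem _ h1 (Submodule.smul_mem _ _ h2))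
      obtain ⟨hx0, hu0⟩ := hpos x hx
      have hx' : x ≠ 0 := ne_of_gt hx0
      have hu : (1 + lam * x) ≠ 0 := ne_of_gt hu0
      simp only [Pi.smul_apply, Pi.sub_apply, smul_eq_mul]
      field_simp
      ring

lemma pf_M (hlam : lam ≠ 0) (hd0 : 1 ≤ d0) (hpos : ∀ x ∈ I, 0 < x ∧ 0 < 1 + lam * x)
    {n : ℕ} (hn : n ≤ d + d0 + 1) :
    (fun x : ℝ => x ^ n / (x ^ (d0 - 1) * (1 + lam * x) ^ d)) ∈ pfSpace lam d d0 I := by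
  rcases le_or_gt (d0 - 1) n with h | h
  · refine pf_congr (g := fun x : ℝ => x ^ (n - (d0 - 1)) / (1 + lam * x) ^ d)
      (fun x hx => ?_) (pf_T hlam hpos _ d (by omega) le_rfl)
    obtain ⟨hx0, hu0⟩ := hpos x hx
    have hx' : x ≠ 0 := ne_of_gt hx0
    have hpow : x ^ n = x ^ (n - (d0 - 1)) * x ^ (d0 - 1) := by
      rw [← pow_add]; congr 1; omega
    rw [hpow, mul_comm (x ^ (d0-1)) ((1 + lam*x)^d)]
    rw [mul_div_mul_right _ _ (pow_ne_zero _ hx')]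
  · refine pf_congr (g := fun x : ℝ => 1 / (x ^ (d0 - 1 - n) * (1 + lam * x) ^ d))
      (fun x hx => ?_) (pf_R hlam hpos _ _ _ rfl (by omega) le_rfl)
    obtain ⟨hx0, hu0⟩ := hpos x hx
    have hx' : x ≠ 0 := ne_of_gt hx0
    have hu : (1 + lam * x) ≠ 0 := ne_of_gt hu0
    have hpow : x ^ (d0 - 1) = x ^ (d0 - 1 - n) * x ^ n := by
      rw [← pow_add]; congr 1; omega
    rw [hpow]
    field_simp

end pf

lemma antideriv_aux (a b : ℝ) (hab : a < b) (f F ψ : ℝ → ℝ)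
    (hf : ∀ x ∈ Ioo a b, HasDerivAt f (ψ x) x)
    (hF : ∀ x ∈ Ioo a b, HasDerivAt F (ψ x) x) :
    ∃ c : ℝ, ∀ x ∈ Ioo a b, f x = F x + c := by
  have hx0 : (a + b) / 2 ∈ Ioo a b := ⟨by linarith, by linarith⟩
  refine ⟨f ((a+b)/2) - F ((a+b)/2), fun x hx => ?_⟩
  have key : (f - F) x = (f - F) ((a+b)/2) := by
    refine (convex_Ioo a b).is_const_of_fderivWithin_eq_zero
      (fun y hy => (((hf y hy).sub (hF y hy)).differentiableAt).differentiableWithinAt)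
      (fun y hy => ?_) hx hx0
    have h0 : HasDerivAt (f - F) 0 y := by
      simpa using ((hf y hy).sub (hF y hy))
    rw [fderivWithin_of_isOpen isOpen_Ioo hy, h0.hasFDerivAt.fderiv]
    ext; simp
  simp only [Pi.sub_apply] at key
  linarith

lemma hasDerivAt_div_pow (k : ℝ) (m : ℕ) (x : ℝ) :
    HasDerivAt (fun y : ℝ => k / ((m : ℝ) + 1) * y ^ (m + 1)) (k * x ^ m) x := by
  have h := (hasDerivAt_pow (m + 1) x).const_mul (k / ((m : ℝ) + 1))
  refine h.congr_deriv ?_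
  have : ((m : ℝ) + 1) ≠ 0 := by positivity
  push_cast
  field_simp

/-- structure of the fibre-density function `φ`: if
`g(x) = (1+λx)^d x^{d₀-1} φ(x)` satisfies
`g''(x) = (1+λx)^d x^{d₀-1} (c₀ + c₁/x + c₂/(1+λx))` on a nonempty open
interval `I ⊆ {x > 0, 1+λx > 0}`, then `φ` has the partial-fraction form
`A₀ + A₁ x + A₂ x² + ∑_{j=1}^{d₀-1} B_j/x^j + ∑_{j=1}^d C_j/(1+λx)^j`. -/
theorem stmt_19 (lam : ℝ) (hlam : lam ≠ 0) (d d0 : ℕ) (hd : 1 ≤ d)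
    (hd0 : 1 ≤ d0) (c0 c1 c2 : ℝ) (hc1 : d0 = 1 → c1 = 0)
    (a b : ℝ) (hab : a < b) (I : Set ℝ) (hI : I = Ioo a b)
    (hIsub : I ⊆ {x : ℝ | 0 < x ∧ 0 < 1 + lam * x})
    (φ : ℝ → ℝ) (hφ : ContDiffOn ℝ (⊤ : ℕ∞) φ I)
    (hode : ∀ x ∈ I,
      deriv (deriv (fun y : ℝ => (1 + lam * y) ^ d * y ^ (d0 - 1) * φ y)) x =
        (1 + lam * x) ^ d * x ^ (d0 - 1) *
          (c0 + c1 / x + c2 / (1 + lam * x))) :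
    ∃ (A0 A1 A2 : ℝ) (B C : ℕ → ℝ), ∀ x ∈ I,
      φ x = A0 + A1 * x + A2 * x ^ 2 +
        (∑ j ∈ Finset.Icc 1 (d0 - 1), B j / x ^ j) +
        (∑ j ∈ Finset.Icc 1 d, C j / (1 + lam * x) ^ j) := by
  subst hI
  set I := Ioo a b with hIdef
  have hpos : ∀ x ∈ I, 0 < x ∧ 0 < 1 + lam * x := fun x hx => hIsub hx
  set g : ℝ → ℝ := fun y : ℝ => (1 + lam * y) ^ d * y ^ (d0 - 1) * φ y with hgdef
  -- smoothness of g
  have hpoly : ContDiff ℝ (⊤ : ℕ∞) (fun y : ℝ => (1 + lam * y) ^ d * y ^ (d0 - 1)) := by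
    exact ((contDiff_const.add (contDiff_const.mul contDiff_id)).pow d).mul (contDiff_id.pow _)
  have hgc : ContDiffOn ℝ (⊤ : ℕ∞) g I := hpoly.contDiffOn.mul hφ
  have hg1 : ContDiffOn ℝ (⊤ : ℕ∞) (deriv g) I := hgc.deriv_of_isOpen isOpen_Ioo (by simp)
  have hgx : ∀ x ∈ I, HasDerivAt g (deriv g x) x := fun x hx =>
    (((hgc.contDiffAt (isOpen_Ioo.mem_nhds hx)).differentiableAt (by simp))).hasDerivAt
  have hg1x : ∀ x ∈ I, HasDerivAt (deriv g) (deriv (deriv g) x) x := fun x hx =>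
    (((hg1.contDiffAt (isOpen_Ioo.mem_nhds hx)).differentiableAt (by simp))).hasDerivAt
  -- the right-hand side is a polynomial
  set P : ℝ[X] := C c0 * ((1 + C lam * X) ^ d * X ^ (d0 - 1))
      + C c1 * ((1 + C lam * X) ^ d * X ^ (d0 - 2))
      + C c2 * ((1 + C lam * X) ^ (d - 1) * X ^ (d0 - 1)) with hPdef
  have hbase : (1 + C lam * X : ℝ[X]).natDegree ≤ 1 := by
    refine le_trans (natDegree_add_le _ _) (max_le (by simp)
      (le_trans (natDegree_C_mul_le _ _) natDegree_X_le))
  have hmono : ∀ i j : ℕ, ((1 + C lam * X : ℝ[X]) ^ i * X ^ j).natDegree ≤ i + j := by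
    intro i j
    refine le_trans (natDegree_mul_le) (add_le_add ?_ (le_of_eq (natDegree_X_pow j)))
    exact le_trans natDegree_pow_le (by
      calc i * (1 + C lam * X : ℝ[X]).natDegree ≤ i * 1 := Nat.mul_le_mul_left i hbase
      _ = i := by omega)
  have hPdeg : P.natDegree < d + d0 := by
    have h1 := hmono d (d0 - 1)
    have h2 := hmono d (d0 - 2)
    have h3 := hmono (d - 1) (d0 - 1)
    refine lt_of_le_of_lt (natDegree_add_le _ _) ?_
    rw [Nat.max_lt]
    constructor
    · refine lt_of_le_of_lt (natDegree_add_le _ _) ?_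
      rw [Nat.max_lt]
      exact ⟨lt_of_le_of_lt (natDegree_C_mul_le _ _) (by omega),
        lt_of_le_of_lt (natDegree_C_mul_le _ _) (by omega)⟩
    · exact lt_of_le_of_lt (natDegree_C_mul_le _ _) (by omega)
  have hPeval : ∀ x ∈ I, P.eval x
      = (1 + lam * x) ^ d * x ^ (d0 - 1) * (c0 + c1 / x + c2 / (1 + lam * x)) := by
    intro x hx
    obtain ⟨hx0, hu0⟩ := hpos x hx
    have hx' : x ≠ 0 := ne_of_gt hx0
    have hu : (1 + lam * x) ≠ 0 := ne_of_gt hu0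
    obtain ⟨m, rfl⟩ : ∃ m, d = m + 1 := ⟨d - 1, by omega⟩
    obtain ⟨k, rfl⟩ : ∃ k, d0 = k + 1 := ⟨d0 - 1, by omega⟩
    simp only [hPdef, eval_add, eval_mul, eval_pow, eval_C, eval_X, eval_one]
    match k with
    | 0 =>
      rw [hc1 rfl]
      simp only [Nat.add_sub_cancel, Nat.zero_add]
      norm_num
      field_simp
      ring
    | (j + 1) =>
      simp only [Nat.add_sub_cancel, show j + 1 + 1 - 2 = j by omega]
      field_simp
      ring
  -- coefficients and antiderivatives
  set N : ℕ := d + d0 with hNdef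
  set c : ℕ → ℝ := fun n => P.coeff n with hcdef
  have hsum : ∀ x : ℝ, P.eval x = ∑ n ∈ Finset.range N, c n * x ^ n := fun x =>
    P.eval_eq_sum_range' hPdeg x
  set F1 : ℝ → ℝ := fun x => ∑ n ∈ Finset.range N, (c n / ((n : ℝ) + 1)) * x ^ (n + 1)
    with hF1def
  set F2 : ℝ → ℝ := fun x => ∑ n ∈ Finset.range N,
      (c n / ((n : ℝ) + 1) / (((n + 1 : ℕ) : ℝ) + 1)) * x ^ ((n + 1) + 1) with hF2def
  have hF1 : ∀ x : ℝ, HasDerivAt F1 (P.eval x) x := by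
    intro x
    rw [hsum x]
    exact HasDerivAt.fun_sum (fun n _ => hasDerivAt_div_pow (c n) n x)
  have hF2 : ∀ x : ℝ, HasDerivAt F2 (F1 x) x := by
    intro x
    exact HasDerivAt.fun_sum (fun n _ => hasDerivAt_div_pow (c n / ((n : ℝ) + 1)) (n + 1) x)
  -- integrate twice
  obtain ⟨k1, hk1⟩ : ∃ k1 : ℝ, ∀ x ∈ I, deriv g x = F1 x + k1 := by
    refine antideriv_aux a b hab _ _ (fun x => P.eval x)
      (fun x hx => ?_) (fun x hx => hF1 x)
    have h := hg1x x hx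
    rw [hode x hx, ← hPeval x hx] at h
    exact h
  obtain ⟨k2, hk2⟩ : ∃ k2 : ℝ, ∀ x ∈ I, g x = (F2 x + k1 * x) + k2 := by
    refine antideriv_aux a b hab _ _ (fun x => F1 x + k1)
      (fun x hx => ?_) (fun x hx => ?_)
    · have h := hgx x hx
      rw [hk1 x hx] at h
      exact h
    · have hlin : HasDerivAt (fun y : ℝ => k1 * y) k1 x := by
        simpa using (hasDerivAt_id x).const_mul k1
      exact (hF2 x).add hlin
  -- φ is in the partial fraction space
  have hmem : φ ∈ pfSpace lam d d0 I := by
    set D : ℝ → ℝ := fun x => x ^ (d0 - 1) * (1 + lam * x) ^ d with hDdef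
    refine pf_congr (g :=
        (∑ n ∈ Finset.range N, (c n / ((n : ℝ) + 1) / (((n + 1 : ℕ) : ℝ) + 1)) •
          (fun x : ℝ => x ^ ((n + 1) + 1) / D x))
        + k1 • (fun x : ℝ => x ^ 1 / D x) + k2 • (fun x : ℝ => x ^ 0 / D x))
      (fun x hx => ?_) ?_
    · obtain ⟨hx0, hu0⟩ := hpos x hx
      have hx' : x ≠ 0 := ne_of_gt hx0
      have hu : (1 + lam * x) ≠ 0 := ne_of_gt hu0
      have hD : D x ≠ 0 := mul_ne_zero (pow_ne_zero _ hx') (pow_ne_zero _ hu)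
      have hφx : φ x = (F2 x + k1 * x + k2) / D x := by
        rw [eq_div_iff hD]
        have h := hk2 x hx
        simp only [hgdef] at h
        rw [← h, hDdef]
        ring
      simp only [Pi.add_apply, Finset.sum_apply, Pi.smul_apply, smul_eq_mul, pow_one, pow_zero]
      rw [hφx, hF2def, add_div, add_div, Finset.sum_div]
      simp only [mul_div_assoc, mul_one_div]
    · refine Submodule.add_mem _ (Submodule.add_mem _ (Submodule.sum_mem _ fun n hn => ?_) ?_) ?_
      · exact Submodule.smul_mem _ _ (pf_M hlam hd0 hpos
          (by have := Finset.mem_range.1 hn; omega))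
      · exact Submodule.smul_mem _ _ (pf_M hlam hd0 hpos (by omega))
      · exact Submodule.smul_mem _ _ (pf_M hlam hd0 hpos (by omega))
  obtain ⟨A0, A1, A2, B, C, hform⟩ := hmem
  exact ⟨A0, A1, A2, B, C, hform⟩
end
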